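/- arXiv:2204.00244 — 2 statements merged into one kernel-verified Lean document; each statement's English description precedes it below -/
import Mathlib

section
/- Let s, m_1, m_2, m_3, m_4 be points in ℝ³. Set d_i = ‖s − m_i‖² for i = 1,…,4 and D_{i,j} = ‖m_i − m_j‖². Then f_D(d_1, d_2, d_3, d_4) = 0, i.e., the Cayley–Menger determinant of the five points s, m_1, m_2, m_3, m_4 vanishes. -/
/-- The Cayley–Menger polynomial `f_D` for squared-distance data `D` between four points,
evaluated at `u = (u₁, u₂, u₃, u₄)`: the determinant of the 6×6 matrix whose first row is
`(0, u₁, …, u₄, 1)`, whose `(i+1)`-st row is `(uᵢ, D i 1, …, D i 4, 1)`, and whose last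
row is `(1, 1, 1, 1, 1, 0)`. -/
noncomputable def cayleyMenger (D : Fin 4 → Fin 4 → ℝ) (u : Fin 4 → ℝ) : ℝ :=
  Matrix.det (Matrix.of
    ![![0,    u 0,    u 1,    u 2,    u 3,    1],
      ![u 0,  D 0 0,  D 0 1,  D 0 2,  D 0 3,  1],
      ![u 1,  D 1 0,  D 1 1,  D 1 2,  D 1 3,  1],
      ![u 2,  D 2 0,  D 2 1,  D 2 2,  D 2 3,  1],
      ![u 3,  D 3 0,  D 3 1,  D 3 2,  D 3 3,  1],
      ![1,    1,      1,      1,      1,      0]])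

/-- A 6×6 matrix that factors through a 6×5 times 5×6 product has zero determinant. -/
lemma det_mul_rect_eq_zero (A : Matrix (Fin 6) (Fin 5) ℝ) (B : Matrix (Fin 5) (Fin 6) ℝ) :
    (A * B).det = 0 := by
  by_contra h
  have h1 : (A * B).rank ≤ A.rank := Matrix.rank_mul_le_left A B
  have h2 : A.rank ≤ 5 := by simpa using Matrix.rank_le_card_width A
  have h3 : (A * B).rank = 6 := by
    rw [Matrix.rank_of_isUnit]
    · simp
    · exact (Matrix.isUnit_iff_isUnit_det _).mpr (isUnit_iff_ne_zero.mpr h)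
  omega

lemma cons_val_five {α : Type*} (a b c d e f : α) : ![a, b, c, d, e, f] 5 = f := rfl

lemma cons_val_five' {α : Type*} (a b c d e : α) (g : Fin 1 → α) :
    Matrix.vecCons a (Matrix.vecCons b (Matrix.vecCons c (Matrix.vecCons d
      (Matrix.vecCons e g)))) (5 : Fin 6) = g 0 := rfl

set_option maxHeartbeats 4000000 in
set_option maxRecDepth 2000 in
/-- For any points `s, m₁, …, m₄ ∈ ℝ³`, setting `dᵢ = ‖s − mᵢ‖²` and
`D i j = ‖mᵢ − mⱼ‖²`, the Cayley–Menger determinant `f_D(d₁, …, d₄)` vanishes. -/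
theorem cayleyMenger_vanishes (s : EuclideanSpace ℝ (Fin 3))
    (m : Fin 4 → EuclideanSpace ℝ (Fin 3)) :
    cayleyMenger (fun i j => ‖m i - m j‖ ^ 2) (fun i => ‖s - m i‖ ^ 2) = 0 := by
  have hn : ∀ x y : EuclideanSpace ℝ (Fin 3), ‖x - y‖ ^ 2 =
      (x 0 - y 0) ^ 2 + (x 1 - y 1) ^ 2 + (x 2 - y 2) ^ 2 := by
    intro x y
    rw [EuclideanSpace.norm_eq, Real.sq_sqrt (by positivity)]
    simp [Fin.sum_univ_succ, sq_abs]
    ring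
  have hfact : (Matrix.of
    ![![0, ‖s - m 0‖^2, ‖s - m 1‖^2, ‖s - m 2‖^2, ‖s - m 3‖^2, 1],
      ![‖s - m 0‖^2, ‖m 0 - m 0‖^2, ‖m 0 - m 1‖^2, ‖m 0 - m 2‖^2, ‖m 0 - m 3‖^2, 1],
      ![‖s - m 1‖^2, ‖m 1 - m 0‖^2, ‖m 1 - m 1‖^2, ‖m 1 - m 2‖^2, ‖m 1 - m 3‖^2, 1],
      ![‖s - m 2‖^2, ‖m 2 - m 0‖^2, ‖m 2 - m 1‖^2, ‖m 2 - m 2‖^2, ‖m 2 - m 3‖^2, 1],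
      ![‖s - m 3‖^2, ‖m 3 - m 0‖^2, ‖m 3 - m 1‖^2, ‖m 3 - m 2‖^2, ‖m 3 - m 3‖^2, 1],
      ![1, 1, 1, 1, 1, 0]] : Matrix (Fin 6) (Fin 6) ℝ) =
    (Matrix.of
    ![![s 0 ^ 2 + s 1 ^ 2 + s 2 ^ 2, 1, s 0, s 1, s 2],
      ![m 0 0 ^ 2 + m 0 1 ^ 2 + m 0 2 ^ 2, 1, m 0 0, m 0 1, m 0 2],
      ![m 1 0 ^ 2 + m 1 1 ^ 2 + m 1 2 ^ 2, 1, m 1 0, m 1 1, m 1 2],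
      ![m 2 0 ^ 2 + m 2 1 ^ 2 + m 2 2 ^ 2, 1, m 2 0, m 2 1, m 2 2],
      ![m 3 0 ^ 2 + m 3 1 ^ 2 + m 3 2 ^ 2, 1, m 3 0, m 3 1, m 3 2],
      ![1, 0, 0, 0, 0]] : Matrix (Fin 6) (Fin 5) ℝ) *
    (Matrix.of
    ![![1, 1, 1, 1, 1, 0],
      ![s 0 ^ 2 + s 1 ^ 2 + s 2 ^ 2, m 0 0 ^ 2 + m 0 1 ^ 2 + m 0 2 ^ 2,
        m 1 0 ^ 2 + m 1 1 ^ 2 + m 1 2 ^ 2, m 2 0 ^ 2 + m 2 1 ^ 2 + m 2 2 ^ 2,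
        m 3 0 ^ 2 + m 3 1 ^ 2 + m 3 2 ^ 2, 1],
      ![-2 * s 0, -2 * m 0 0, -2 * m 1 0, -2 * m 2 0, -2 * m 3 0, 0],
      ![-2 * s 1, -2 * m 0 1, -2 * m 1 1, -2 * m 2 1, -2 * m 3 1, 0],
      ![-2 * s 2, -2 * m 0 2, -2 * m 1 2, -2 * m 2 2, -2 * m 3 2, 0]] :
      Matrix (Fin 5) (Fin 6) ℝ) := by
    ext i j
    fin_cases i <;> fin_cases j <;>
      · simp [Matrix.mul_apply, Fin.sum_univ_succ, hn, cons_val_five, cons_val_five']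
        try ring
  unfold cayleyMenger
  rw [hfact]
  apply det_mul_rect_eq_zero
end

section
/- Let s_1,…,s_4 ∈ ℝ³ form an unlucky stack with respect to m_1,…,m_4 ∈ ℝ³. Define the ghost point s_ghost ∈ ℝ³ to have the same first and second coordinates as s_1 and third coordinate 2·z(m_1) − z(s_1), where z denotes the third coordinate. Then for every i = 1,…,4 the reflection of s_i across the horizontal plane through m_i (i.e., the point with the same first and second coordinates as s_i and third coordinate 2·z(m_i) − z(s_i)) equals s_ghost, and consequently ‖m_i − s_i‖ = ‖m_i − s_ghost‖ for every i. -/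
/-- Points `s₁, …, s₄ ∈ ℝ³` form an *unlucky stack* with respect to `m₁, …, m₄ ∈ ℝ³` if
all `sᵢ` share the same first coordinate and the same second coordinate, and for all
`i, j` the third coordinate of `sⱼ − sᵢ` is twice the third coordinate of `mⱼ − mᵢ`. -/
def UnluckyStack (s m : Fin 4 → EuclideanSpace ℝ (Fin 3)) : Prop :=
  (∀ i j : Fin 4, s i 0 = s j 0) ∧ (∀ i j : Fin 4, s i 1 = s j 1) ∧
    (∀ i j : Fin 4, s j 2 - s i 2 = 2 * (m j 2 - m i 2))

/-- If `s₁, …, s₄` form an unlucky stack with respect to `m₁, …, m₄`,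
and `s_ghost` is the point with the same first and second coordinates as `s₁` and third
coordinate `2·z(m₁) − z(s₁)`, then for every `i` the reflection of `sᵢ` across the
horizontal plane through `mᵢ` equals `s_ghost`; consequently `‖mᵢ − sᵢ‖ = ‖mᵢ − s_ghost‖`
for every `i`. -/
theorem unluckyStack_ghost (s m : Fin 4 → EuclideanSpace ℝ (Fin 3))
    (h : UnluckyStack s m)
    (sghost : EuclideanSpace ℝ (Fin 3))
    (hg : sghost = ![s 0 0, s 0 1, 2 * m 0 2 - s 0 2]) :
    (∀ i, (WithLp.toLp 2 ![s i 0, s i 1, 2 * m i 2 - s i 2] : EuclideanSpace ℝ (Fin 3)) = sghost) ∧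
      (∀ i, ‖m i - s i‖ = ‖m i - sghost‖) := by
  obtain ⟨h0, h1, h2⟩ := h
  have key : ∀ i, (WithLp.toLp 2 ![s i 0, s i 1, 2 * m i 2 - s i 2] : EuclideanSpace ℝ (Fin 3)) = sghost := by
    intro i
    apply WithLp.ofLp_injective
    rw [hg]
    funext j
    fin_cases j
    · exact h0 i 0
    · exact h1 i 0
    · have := h2 i 0
      show 2 * m i 2 - s i 2 = 2 * m 0 2 - s 0 2
      linarith
  refine ⟨key, fun i => ?_⟩
  rw [← key i]
  rw [EuclideanSpace.norm_eq, EuclideanSpace.norm_eq]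
  congr 1
  apply Finset.sum_congr rfl
  intro j _
  fin_cases j <;> simp [PiLp.sub_apply] <;> ring_nf
end
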